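/- arXiv:1509.04978 — 3 statements merged into one kernel-verified Lean document; each statement's English description precedes it below -/
import Mathlib

section
/- For a trace-class operator k on ℓ²(ℕ) whose matrix entries (k_{mn}) satisfy ∑_{m,n}(1+m+n)^p |k_{mn}| < ∞ for all p ∈ ℕ (i.e., k is in the Schwartz class S(ℓ²(ℕ))), the function t ↦ Trace(k e^{-tN}) admits an asymptotic expansion near 0⁺ of the form ∑_{r=0}^∞ φ_r(k) t^r, where φ_r(k) = ((-1)^r / r!) ∑_{i=0}^∞ k_{ii} i^r and N is the number operator N e_i = i e_i. -/
/-!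
For `x ≥ 0`, `exp (-x)` differs from its Taylor polynomial of degree `N` by at most `x ^ (N + 1)`
(induction on `N` with the mean value theorem, the remainders being each other's derivatives up
to sign). Summed against the diagonal `kᵢᵢ` at `x = t i`, the error of the truncated expansion is
at most `t ^ (N + 1) ∑ᵢ |kᵢᵢ| i ^ (N + 1)`, which is finite since the Schwartz condition makes the
diagonal decay faster than any power of `i`.
-/

/-- Asymptotic expansion of `φ` at `0⁺` with coefficients `a`. -/
def HasAsympExp (φ : ℝ → ℂ) (a : ℕ → ℂ) : Prop :=
  ∀ N : ℕ, ∃ ε > (0:ℝ), ∃ M : ℝ, ∀ t : ℝ, 0 < t → t < ε →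
    ‖φ t - ∑ r ∈ Finset.range (N + 1), a r * (t : ℂ) ^ r‖ ≤ M * t ^ (N + 1)

open Finset Nat

noncomputable def expNegRemainder (n : ℕ) (x : ℝ) : ℝ :=
  Real.exp (-x) - ∑ r ∈ range (n + 1), (-x) ^ r / r !

theorem hasDerivAt_sum_range_neg_pow_div_factorial (n : ℕ) (x : ℝ) :
    HasDerivAt (fun y : ℝ => ∑ r ∈ range (n + 1), (-y) ^ r / r !)
      (-∑ r ∈ range n, (-x) ^ r / r !) x := by
  have hterm : ∀ r ∈ range (n + 1), HasDerivAt (fun y : ℝ => (-y) ^ r / r !)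
      (r * (-x) ^ (r - 1) * (-1) / r !) x := fun r _ =>
    ((hasDerivAt_pow r (-x)).comp x (hasDerivAt_neg x)).div_const _
  refine (HasDerivAt.fun_sum hterm).congr_deriv ?_
  rw [sum_range_succ', ← sum_neg_distrib]
  simp only [cast_zero, zero_mul, zero_div, add_zero, add_tsub_cancel_right, factorial_succ,
    cast_mul, cast_succ]
  refine sum_congr rfl fun r _ => ?_
  field_simp

theorem hasDerivAt_expNegRemainder (n : ℕ) (x : ℝ) :
    HasDerivAt (expNegRemainder (n + 1)) (-expNegRemainder n x) x := by
  refine ((hasDerivAt_neg x).exp.sub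
    (hasDerivAt_sum_range_neg_pow_div_factorial (n + 1) x)).congr_deriv ?_
  simp only [expNegRemainder]
  ring

theorem abs_expNegRemainder_le (n : ℕ) {x : ℝ} (hx : 0 ≤ x) :
    |expNegRemainder n x| ≤ x ^ (n + 1) := by
  induction n generalizing x with
  | zero =>
    have hle : Real.exp (-x) ≤ 1 := Real.exp_le_one_iff.mpr (by linarith)
    have hge : 1 - x ≤ Real.exp (-x) := by linarith [Real.add_one_le_exp (-x)]
    simp only [expNegRemainder, zero_add, sum_range_one, pow_zero, factorial_zero, cast_one,
      div_one, pow_one]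
    rw [abs_le]
    constructor <;> linarith
  | succ n ih =>
    have hderiv_le : ∀ y ∈ Set.Icc 0 x, ‖-expNegRemainder n y‖ ≤ x ^ (n + 1) := fun y hy =>
      calc ‖-expNegRemainder n y‖ = |expNegRemainder n y| := by rw [norm_neg, Real.norm_eq_abs]
        _ ≤ y ^ (n + 1) := ih hy.1
        _ ≤ x ^ (n + 1) := by gcongr; exacts [hy.1, hy.2]
    have hmvt := (convex_Icc 0 x).norm_image_sub_le_of_norm_hasDerivWithin_le
      (fun y _ => (hasDerivAt_expNegRemainder n y).hasDerivWithinAt) hderiv_le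
      (Set.left_mem_Icc.mpr hx) (Set.right_mem_Icc.mpr hx)
    have hzero : expNegRemainder (n + 1) 0 = 0 := by simp [expNegRemainder, sum_range_succ']
    rw [hzero, sub_zero, sub_zero, Real.norm_eq_abs, Real.norm_eq_abs, abs_of_nonneg hx] at hmvt
    exact hmvt.trans_eq (by ring)

section Moments

variable {a : ℕ → ℂ} (ha : ∀ p : ℕ, Summable fun i : ℕ => ‖a i‖ * (i : ℝ) ^ p)
include ha

theorem summable_mul_natCast_pow (r : ℕ) : Summable fun i : ℕ => a i * (i : ℂ) ^ r :=
  .of_norm <| by simpa [norm_mul, norm_pow, Complex.norm_natCast] using ha r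

theorem summable_mul_exp_neg_mul {t : ℝ} (ht : 0 ≤ t) :
    Summable fun i : ℕ => a i * (Real.exp (-t * i) : ℂ) := by
  refine .of_norm_bounded (by simpa using ha 0) fun i => ?_
  rw [norm_mul, Complex.norm_real, Real.norm_of_nonneg (Real.exp_pos _).le]
  exact mul_le_of_le_one_right (norm_nonneg _)
    (Real.exp_le_one_iff.mpr (by nlinarith [i.cast_nonneg (α := ℝ)]))

theorem tsum_mul_exp_neg_mul_sub_sum {t : ℝ} (ht : 0 ≤ t) (N : ℕ) :
    (∑' i : ℕ, a i * (Real.exp (-t * i) : ℂ)) -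
        ∑ r ∈ range (N + 1), ((-1 : ℂ) ^ r / r ! * ∑' i : ℕ, a i * (i : ℂ) ^ r) * (t : ℂ) ^ r =
      ∑' i : ℕ, a i * (expNegRemainder N (t * i) : ℂ) := by
  have hterm : ∀ r ∈ range (N + 1),
      Summable fun i : ℕ => (-1 : ℂ) ^ r / r ! * (a i * (i : ℂ) ^ r) * (t : ℂ) ^ r :=
    fun r _ => ((summable_mul_natCast_pow ha r).mul_left _).mul_right _
  have hpoly :
      ∑ r ∈ range (N + 1), ((-1 : ℂ) ^ r / r ! * ∑' i : ℕ, a i * (i : ℂ) ^ r) * (t : ℂ) ^ r =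
        ∑' i : ℕ, ∑ r ∈ range (N + 1), (-1 : ℂ) ^ r / r ! * (a i * (i : ℂ) ^ r) * (t : ℂ) ^ r := by
    rw [Summable.tsum_finsetSum hterm]
    refine sum_congr rfl fun r _ => ?_
    rw [tsum_mul_right, tsum_mul_left]
  rw [hpoly, ← (summable_mul_exp_neg_mul ha ht).tsum_sub (summable_sum hterm)]
  refine tsum_congr fun i => ?_
  simp only [expNegRemainder]
  push_cast
  rw [mul_sub, mul_sum, neg_mul]
  congr 1
  refine sum_congr rfl fun r _ => ?_
  rw [neg_pow (_ * _), mul_pow]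
  ring

theorem norm_tsum_mul_exp_neg_mul_sub_sum_le {t : ℝ} (ht : 0 ≤ t) (N : ℕ) :
    ‖(∑' i : ℕ, a i * (Real.exp (-t * i) : ℂ)) -
        ∑ r ∈ range (N + 1), ((-1 : ℂ) ^ r / r ! * ∑' i : ℕ, a i * (i : ℂ) ^ r) * (t : ℂ) ^ r‖ ≤
      (∑' i : ℕ, ‖a i‖ * (i : ℝ) ^ (N + 1)) * t ^ (N + 1) := by
  rw [tsum_mul_exp_neg_mul_sub_sum ha ht, mul_comm]
  refine tsum_of_norm_bounded ((ha (N + 1)).hasSum.mul_left (t ^ (N + 1))) fun i => ?_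
  calc ‖a i * (expNegRemainder N (t * i) : ℂ)‖ = ‖a i‖ * |expNegRemainder N (t * i)| := by
        rw [norm_mul, Complex.norm_real, Real.norm_eq_abs]
    _ ≤ ‖a i‖ * (t * i) ^ (N + 1) := by gcongr; exact abs_expNegRemainder_le N (by positivity)
    _ = t ^ (N + 1) * (‖a i‖ * (i : ℝ) ^ (N + 1)) := by ring

theorem hasAsympExp_tsum_mul_exp_neg_mul :
    HasAsympExp (fun t : ℝ => ∑' i : ℕ, a i * (Real.exp (-t * i) : ℂ))
      (fun r : ℕ => (-1 : ℂ) ^ r / r ! * ∑' i : ℕ, a i * (i : ℂ) ^ r) := fun N =>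
  ⟨1, one_pos, _, fun _ ht _ => norm_tsum_mul_exp_neg_mul_sub_sum_le ha ht.le N⟩

end Moments

theorem summable_norm_diag_mul_pow {k : ℕ → ℕ → ℂ}
    (hk : ∀ p : ℕ, Summable fun mn : ℕ × ℕ => (1 + mn.1 + mn.2 : ℝ) ^ p * ‖k mn.1 mn.2‖)
    (p : ℕ) : Summable fun i : ℕ => ‖k i i‖ * (i : ℝ) ^ p := by
  have hdiag : Function.Injective fun i : ℕ => (i, i) := fun _ _ h => congrArg Prod.fst h
  refine ((hk p).comp_injective hdiag).of_nonneg_of_le (fun i => by positivity) fun i => ?_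
  rw [mul_comm]
  dsimp only [Function.comp_apply]
  gcongr
  linarith [i.cast_nonneg (α := ℝ)]

/-- For a Schwartz-class operator `k` on `ℓ²(ℕ)` (given by its matrix entries),
`t ↦ Trace(k e^{-tN}) = ∑ᵢ kᵢᵢ e^{-ti}` has the asymptotic expansion
`∑ᵣ φᵣ(k) tʳ` with `φᵣ(k) = ((-1)ʳ/r!) ∑ᵢ kᵢᵢ iʳ`. -/
theorem schwartz_heat_trace_asymp_expansion
    (k : ℕ → ℕ → ℂ)
    (hk : ∀ p : ℕ, Summable (fun mn : ℕ × ℕ =>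
      ((1 + mn.1 + mn.2 : ℝ)) ^ p * ‖k mn.1 mn.2‖)) :
    HasAsympExp (fun t : ℝ => ∑' i : ℕ, k i i * (Real.exp (-t * i) : ℂ))
      (fun r : ℕ => ((-1 : ℂ) ^ r / (r.factorial : ℂ)) * ∑' i : ℕ, k i i * (i : ℂ) ^ r) :=
  hasAsympExp_tsum_mul_exp_neg_mul (summable_norm_diag_mul_pow hk)
end

section
/- Let D be a self-adjoint operator and T a bounded operator on a Hilbert space with all the relevant iterated commutators bounded. With δ(T) = [|D|, T] and ∇(T) = [D², T], one has the operator identity ∇ⁿ(T) = ∑_{k=0}^{n} 2^{n−k} (n choose k) δ^{n+k}(T) |D|^{n−k} for all n ≥ 0. -/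
/-- In an associative algebra, with `δ(a) = [x,a]` and `∇(a) = [x²,a]`, one has
`∇ⁿ(a) = ∑_{k=0}^{n} 2^{n−k} (n choose k) δ^{n+k}(a) x^{n−k}`. -/
theorem nabla_pow_eq_sum_delta
    {A : Type*} [Ring A] (x a : A) (n : ℕ) :
    (fun b : A => x ^ 2 * b - b * x ^ 2)^[n] a
      = ∑ k ∈ Finset.range (n + 1),
          (2 ^ (n - k) * n.choose k) • ((fun b : A => x * b - b * x)^[n + k] a * x ^ (n - k)) := by
  set L : Module.End ℕ A := LinearMap.mulLeft ℕ x with hL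
  set R : Module.End ℕ A := LinearMap.mulRight ℕ x with hR
  have hLR : Commute L R := by
    ext b
    simp [hL, hR, Module.End.mul_apply, mul_assoc]
  have hδR : Commute (L - R) R := hLR.sub_left (Commute.refl R)
  -- key algebraic identity: L² - R² = (L-R)² + 2•((L-R)R)
  have key : (L ^ 2 - R ^ 2 : Module.End ℕ A) = (L - R) ^ 2 + (2 : ℕ) • ((L - R) * R) := by
    ext b
    simp only [hL, hR, pow_two, LinearMap.sub_apply, LinearMap.add_apply, Module.End.mul_apply,
      LinearMap.smul_apply, LinearMap.mulLeft_apply, LinearMap.mulRight_apply, two_smul]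
    noncomm_ring
  have hiter : (fun b : A => x ^ 2 * b - b * x ^ 2)^[n] a = ((L ^ 2 - R ^ 2) ^ n) a := by
    rw [Module.End.pow_apply]
    congr 1
    funext b
    simp only [hL, hR, pow_two, LinearMap.sub_apply, Module.End.mul_apply,
      LinearMap.mulLeft_apply, LinearMap.mulRight_apply]
    noncomm_ring
  have hc : Commute ((L - R) ^ 2) ((2 : ℕ) • ((L - R) * R)) := by
    have h1 : Commute (L - R) ((L - R) * R) := (Commute.refl _).mul_right hδR
    exact (h1.pow_left 2).smul_right 2
  rw [hiter, key, hc.add_pow']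
  rw [Finset.Nat.sum_antidiagonal_eq_sum_range_succ
    (f := fun m p => n.choose m • ((((L - R) ^ 2) ^ m) * (((2:ℕ) • ((L - R) * R)) ^ p)))]
  rw [LinearMap.sum_apply]
  refine Finset.sum_congr rfl fun k hk => ?_
  have hkn : k ≤ n := Nat.lt_succ_iff.mp (Finset.mem_range.mp hk)
  have hend : ((L - R) ^ 2) ^ k * ((2 : ℕ) • ((L - R) * R)) ^ (n - k)
      = (2 ^ (n - k) : ℕ) • ((L - R) ^ (n + k) * R ^ (n - k)) := by
    rw [smul_pow, hδR.mul_pow, ← pow_mul, mul_smul_comm, ← mul_assoc, ← pow_add,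
      show 2 * k + (n - k) = n + k by omega]
  rw [hend, smul_comm, smul_smul, (hδR.pow_pow (n + k) (n - k)).eq]
  simp only [LinearMap.smul_apply, Module.End.mul_apply]
  rw [hR, LinearMap.pow_mulRight, LinearMap.mulRight_apply, Module.End.pow_apply]
  congr 1
end

section
/- Suppose f : (0,∞) → ℂ satisfies t^p f(t) ∼ ∑_{r=0}^∞ b_r t^r as t → 0⁺, where f(t) = ∑_{n} c_n e^{-t λ_n} for a sequence λ_n → ∞ of positive reals and summable weights making the zeta function ζ(z) = ∑_n c_n λ_n^{-z} absolutely convergent for Re z > p. Then ζ admits a meromorphic continuation to ℂ with at most simple poles at z = p, p−1, ..., 1, and Res_{z=k} ζ(z) = b_{p−k}/Γ(k) for k ∈ {1, ..., p}; moreover ζ(0) = b_p (minus the n-sum of terms with λ_n = 0, assumed absent). -/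
open Set Filter Topology Complex Asymptotics MeasureTheory

theorem HasAsympExp.isBigO_sub_sum {φ : ℝ → ℂ} {a : ℕ → ℂ} (h : HasAsympExp φ a) (n : ℕ) :
    (fun t => φ t - ∑ r ∈ Finset.range n, a r * (t : ℂ) ^ r) =O[𝓝[>] 0] fun t : ℝ => t ^ n := by
  cases n with
  | succ N =>
    obtain ⟨ε, hε, M, hM⟩ := h N
    refine IsBigO.of_bound M ?_
    filter_upwards [Ioo_mem_nhdsGT hε] with t ht
    rw [Real.norm_of_nonneg (pow_nonneg ht.1.le _)]
    exact hM t ht.1 ht.2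
  | zero =>
    obtain ⟨ε, hε, M, hM⟩ := h 0
    refine IsBigO.of_bound (‖a 0‖ + |M|) ?_
    filter_upwards [Ioo_mem_nhdsGT (lt_min hε one_pos)] with t ht
    have hlin : ‖φ t - a 0‖ ≤ M * t := by
      simpa using hM t ht.1 (ht.2.trans_le (min_le_left _ _))
    have hMt : M * t ≤ |M| := by
      nlinarith [le_abs_self M, abs_nonneg M, ht.1, ht.2.trans_le (min_le_right _ _)]
    simp only [Finset.range_zero, Finset.sum_empty, sub_zero, pow_zero, norm_one, mul_one]
    linarith [norm_le_norm_add_norm_sub' (φ t) (a 0)]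

theorem HasAsympExp.isBigO_sub_sum_cpow {g : ℝ → ℂ} {p : ℕ} {a : ℕ → ℂ}
    (h : HasAsympExp (fun t => (t : ℂ) ^ p * g t) a) (n : ℕ) :
    (fun t => g t - ∑ r ∈ Finset.range n, a r * (t : ℂ) ^ ((r : ℂ) - p))
      =O[𝓝[>] 0] (· ^ (-((p : ℝ) - n))) := by
  have hinv : (fun t : ℝ => ((t : ℂ) ^ p)⁻¹) =O[𝓝[>] 0] fun t : ℝ => (t ^ p)⁻¹ :=
    isBigO_of_le _ fun t => by simp
  refine (hinv.mul (h.isBigO_sub_sum n)).congr' ?_ ?_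
  · filter_upwards [self_mem_nhdsWithin] with t (ht : 0 < t)
    have ht' : (t : ℂ) ≠ 0 := ofReal_ne_zero.mpr ht.ne'
    rw [mul_sub, inv_mul_cancel_left₀ (pow_ne_zero _ ht'), Finset.mul_sum]
    congr 1
    refine Finset.sum_congr rfl fun r _ => ?_
    rw [cpow_sub _ _ ht', cpow_natCast, cpow_natCast, div_eq_inv_mul]
    ring
  · filter_upwards [self_mem_nhdsWithin] with t (ht : 0 < t)
    rw [neg_sub, Real.rpow_sub ht, Real.rpow_natCast, Real.rpow_natCast, div_eq_inv_mul]

/-- `1 / (Γ(z) (z - a))`; the `dslope` form makes it entire when `1 / Γ` vanishes at `a`, i.e. when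
`a` is a nonpositive integer, with the removable singularity at `z = a` filled in. -/
noncomputable def invGammaDivSub (a z : ℂ) : ℂ :=
  dslope (fun s => (Gamma s)⁻¹) a z + (Gamma a)⁻¹ * (z - a)⁻¹

theorem invGammaDivSub_of_ne {a z : ℂ} (h : z ≠ a) :
    invGammaDivSub a z = (Gamma z)⁻¹ * (z - a)⁻¹ := by
  rw [invGammaDivSub, dslope_of_ne _ h, slope_def_field, div_eq_mul_inv]
  ring

theorem analyticAt_invGammaDivSub {a z : ℂ} (h : (Gamma a)⁻¹ = 0 ∨ z ≠ a) :
    AnalyticAt ℂ (invGammaDivSub a) z := by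
  have hdslope : Differentiable ℂ (dslope (fun s => (Gamma s)⁻¹) a) := fun w =>
    ((differentiableOn_dslope univ_mem).mpr differentiable_one_div_Gamma.differentiableOn
      w (mem_univ w)).differentiableAt univ_mem
  refine (hdslope.analyticAt z).add ?_
  rcases h with h | h
  · simpa only [h, zero_mul] using analyticAt_const
  · exact analyticAt_const.mul ((analyticAt_id.sub analyticAt_const).inv (sub_ne_zero.mpr h))

theorem tendsto_sub_mul_invGammaDivSub (a : ℂ) :
    Tendsto (fun z => (z - a) * invGammaDivSub a z) (𝓝[≠] a) (𝓝 (Gamma a)⁻¹) := by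
  refine (differentiable_one_div_Gamma.continuous.tendsto a).mono_left nhdsWithin_le_nhds
    |>.congr' ?_
  filter_upwards [self_mem_nhdsWithin] with z hz
  rw [invGammaDivSub_of_ne hz, mul_left_comm, mul_inv_cancel₀ (sub_ne_zero.mpr hz), mul_one]

theorem invGammaDivSub_zero_zero : invGammaDivSub 0 0 = 1 := by
  have hcont : ContinuousAt (invGammaDivSub 0) 0 :=
    (analyticAt_invGammaDivSub (Or.inl (by rw [Gamma_zero, inv_zero]))).continuousAt
  have hlim : Tendsto (invGammaDivSub 0) (𝓝[≠] 0) (𝓝 1) := by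
    have h := (differentiable_one_div_Gamma.continuous.tendsto 1).comp
      ((continuous_add_const (1 : ℂ)).tendsto' 0 1 (zero_add 1))
    rw [Gamma_one, inv_one] at h
    refine (h.mono_left nhdsWithin_le_nhds).congr' ?_
    filter_upwards [self_mem_nhdsWithin] with z hz
    rw [Function.comp_apply, invGammaDivSub_of_ne hz, sub_zero, Gamma_add_one z hz, mul_inv,
      mul_comm]
  exact tendsto_nhds_unique (hcont.tendsto.mono_left nhdsWithin_le_nhds) hlim

theorem invGammaDivSub_zero_of_ne {a : ℂ} (h : a ≠ 0) : invGammaDivSub a 0 = 0 := by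
  rw [invGammaDivSub_of_ne h.symm, Gamma_zero, inv_zero, zero_mul]

theorem analyticAt_invGammaDivSub_natCast_sub (p r : ℕ) {z : ℂ}
    (hz : r < p → z ≠ ((p - r : ℕ) : ℂ)) : AnalyticAt ℂ (invGammaDivSub ((p : ℂ) - r)) z := by
  rcases lt_or_ge r p with h | h
  · exact analyticAt_invGammaDivSub (Or.inr (by rw [← Nat.cast_sub h.le]; exact hz h))
  · refine analyticAt_invGammaDivSub (Or.inl ?_)
    rw [show (p : ℂ) - r = -((r - p : ℕ) : ℂ) by push_cast [Nat.cast_sub h]; ring,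
      Gamma_neg_nat_eq_zero, inv_zero]

section Mellin

variable {E : Type*} [NormedAddCommGroup E] {f : ℝ → E}

theorem mellin_congr_Ioi [NormedSpace ℂ E] {g : ℝ → E} (h : EqOn f g (Ioi 0)) (s : ℂ) :
    mellin f s = mellin g s :=
  setIntegral_congr_fun measurableSet_Ioi fun t ht => by rw [h ht]

theorem ContinuousOn.locallyIntegrableOn_indicator (hf : ContinuousOn f (Ioi 0)) {u : Set ℝ}
    (hu : MeasurableSet u) : LocallyIntegrableOn (u.indicator f) (Ioi 0) := fun x hx =>
  let ⟨v, hv, hint⟩ := hf.locallyIntegrableOn measurableSet_Ioi x hx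
  ⟨v, hv, hint.indicator hu⟩

theorem indicator_Ioc_isBigO_exp_atTop :
    (Ioc 0 1).indicator f =O[atTop] fun t => Real.exp (-1 * t) := by
  refine EventuallyEq.trans_isBigO ?_ (isBigO_zero _ _)
  filter_upwards [eventually_gt_atTop 1] with t ht
  exact indicator_of_notMem (fun h => (h.2.trans_lt ht).false) f

theorem indicator_Ioi_isBigO_nhdsGT_zero (g : ℝ → ℝ) : (Ioi 1).indicator f =O[𝓝[>] 0] g := by
  refine EventuallyEq.trans_isBigO ?_ (isBigO_zero _ _)
  filter_upwards [nhdsWithin_le_nhds (Iio_mem_nhds one_pos)] with t ht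
  exact indicator_of_notMem (fun h => (lt_asymm ht h).elim) f

variable [NormedSpace ℂ E]

theorem mellinConvergent_indicator_Ioc (hf : ContinuousOn f (Ioi 0)) {b : ℝ}
    (hbot : f =O[𝓝[>] 0] (· ^ (-b))) {s : ℂ} (hs : b < s.re) :
    MellinConvergent ((Ioc 0 1).indicator f) s :=
  mellinConvergent_of_isBigO_rpow_exp one_pos (hf.locallyIntegrableOn_indicator measurableSet_Ioc)
    indicator_Ioc_isBigO_exp_atTop
    ((isBigO_of_le _ fun t => norm_indicator_le_norm_self f t).trans hbot) hs

theorem differentiableAt_mellin_indicator_Ioc (hf : ContinuousOn f (Ioi 0)) {b : ℝ}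
    (hbot : f =O[𝓝[>] 0] (· ^ (-b))) {s : ℂ} (hs : b < s.re) :
    DifferentiableAt ℂ (mellin ((Ioc 0 1).indicator f)) s :=
  mellin_differentiableAt_of_isBigO_rpow_exp one_pos
    (hf.locallyIntegrableOn_indicator measurableSet_Ioc) indicator_Ioc_isBigO_exp_atTop
    ((isBigO_of_le _ fun t => norm_indicator_le_norm_self f t).trans hbot) hs

theorem mellinConvergent_indicator_Ioi_one (hf : ContinuousOn f (Ioi 0)) {a : ℝ} (ha : 0 < a)
    (htop : f =O[atTop] fun t => Real.exp (-a * t)) (s : ℂ) :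
    MellinConvergent ((Ioi 1).indicator f) s :=
  mellinConvergent_of_isBigO_rpow_exp ha (hf.locallyIntegrableOn_indicator measurableSet_Ioi)
    ((isBigO_of_le _ fun t => norm_indicator_le_norm_self f t).trans htop)
    (indicator_Ioi_isBigO_nhdsGT_zero _) (sub_one_lt s.re)

theorem differentiable_mellin_indicator_Ioi_one (hf : ContinuousOn f (Ioi 0)) {a : ℝ}
    (ha : 0 < a) (htop : f =O[atTop] fun t => Real.exp (-a * t)) :
    Differentiable ℂ (mellin ((Ioi 1).indicator f)) := fun s =>
  mellin_differentiableAt_of_isBigO_rpow_exp ha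
    (hf.locallyIntegrableOn_indicator measurableSet_Ioi)
    ((isBigO_of_le _ fun t => norm_indicator_le_norm_self f t).trans htop)
    (indicator_Ioi_isBigO_nhdsGT_zero _) (sub_one_lt s.re)

end Mellin

noncomputable def heatTrace (lam : ℕ → ℝ) (c : ℕ → ℂ) (t : ℝ) : ℂ :=
  ∑' n, c n * (Real.exp (-t * lam n) : ℂ)

section HeatTrace

variable {lam : ℕ → ℝ} {c : ℕ → ℂ}

theorem norm_mul_exp_ofReal (w : ℂ) (x : ℝ) : ‖w * (Real.exp x : ℂ)‖ = ‖w‖ * Real.exp x := by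
  rw [norm_mul, norm_real, Real.norm_of_nonneg (Real.exp_pos x).le]

theorem summable_norm_div_rpow_re (hlam : ∀ n, 0 < lam n) {z : ℂ}
    (h : Summable fun n => c n * (lam n : ℂ) ^ (-z)) :
    Summable fun n => ‖c n‖ / lam n ^ z.re :=
  h.norm.congr fun n => by
    rw [norm_mul, norm_cpow_eq_rpow_re_of_pos (hlam n), neg_re, Real.rpow_neg (hlam n).le,
      div_eq_mul_inv]

theorem summable_norm_mul_exp_neg (hlim : Tendsto lam atTop atTop) {σ : ℝ}
    (hσ : Summable fun n => ‖c n‖ / lam n ^ σ) {s : ℝ} (hs : 0 < s) :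
    Summable fun n => ‖c n‖ * Real.exp (-s * lam n) := by
  refine hσ.of_norm_bounded_eventually_nat ?_
  have hsmall := (tendsto_rpow_mul_exp_neg_mul_atTop_nhds_zero σ s hs).comp hlim
  filter_upwards [hlim.eventually_gt_atTop 0, hsmall.eventually (gt_mem_nhds one_pos)]
    with n hpos hlt
  have hpow : 0 < lam n ^ σ := Real.rpow_pos_of_pos hpos σ
  rw [norm_mul, norm_norm, Real.norm_of_nonneg (Real.exp_pos _).le, le_div_iff₀ hpow, mul_assoc]
  exact mul_le_of_le_one_right (norm_nonneg _) (by simpa [mul_comm] using hlt.le)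

theorem hasSum_heatTrace (hlim : Tendsto lam atTop atTop) {σ : ℝ}
    (hσ : Summable fun n => ‖c n‖ / lam n ^ σ) {t : ℝ} (ht : 0 < t) :
    HasSum (fun n => c n * (Real.exp (-t * lam n) : ℂ)) (heatTrace lam c t) :=
  (Summable.of_norm ((summable_norm_mul_exp_neg hlim hσ ht).congr fun _ =>
    (norm_mul_exp_ofReal _ _).symm)).hasSum

theorem continuousOn_heatTrace (hlam : ∀ n, 0 < lam n) (hlim : Tendsto lam atTop atTop)
    {σ : ℝ} (hσ : Summable fun n => ‖c n‖ / lam n ^ σ) :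
    ContinuousOn (heatTrace lam c) (Ioi 0) := by
  intro t ht
  have hcont : ContinuousOn (heatTrace lam c) (Ioi (t / 2)) := by
    refine continuousOn_tsum (fun _ => by fun_prop)
      (summable_norm_mul_exp_neg hlim hσ (half_pos ht)) fun n x hx => ?_
    rw [norm_mul_exp_ofReal]
    gcongr
    exacts [(hlam n).le, (mem_Ioi.mp hx).le]
  exact (hcont.continuousAt (Ioi_mem_nhds (half_lt_self ht))).continuousWithinAt

theorem heatTrace_isBigO_exp_atTop (hlam : ∀ n, 0 < lam n) (hlim : Tendsto lam atTop atTop)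
    {σ : ℝ} (hσ : Summable fun n => ‖c n‖ / lam n ^ σ) :
    ∃ δ > 0, heatTrace lam c =O[atTop] fun t => Real.exp (-δ * t) := by
  obtain ⟨n₀, hmin⟩ := (Nat.cofinite_eq_atTop ▸ hlim).exists_forall_le
  set δ := lam n₀
  have hsum₁ := summable_norm_mul_exp_neg hlim hσ one_pos
  refine ⟨δ, hlam n₀, IsBigO.of_bound ((∑' n, ‖c n‖ * Real.exp (-1 * lam n)) * Real.exp δ) ?_⟩
  filter_upwards [eventually_ge_atTop 1] with t ht
  have hterm : ∀ n, ‖c n‖ * Real.exp (-t * lam n)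
      ≤ ‖c n‖ * Real.exp (-1 * lam n) * (Real.exp δ * Real.exp (-δ * t)) := fun n => by
    rw [mul_assoc, ← Real.exp_add, ← Real.exp_add]
    gcongr
    nlinarith [hmin n]
  calc ‖heatTrace lam c t‖ ≤ ∑' n, ‖c n‖ * Real.exp (-t * lam n) := by
        simpa only [heatTrace, norm_mul_exp_ofReal] using
          norm_tsum_le_tsum_norm (hasSum_heatTrace hlim hσ (by linarith)).summable.norm
    _ ≤ ∑' n, ‖c n‖ * Real.exp (-1 * lam n) * (Real.exp δ * Real.exp (-δ * t)) :=
        (summable_norm_mul_exp_neg hlim hσ (by linarith)).tsum_le_tsum hterm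
          (hsum₁.mul_right _)
    _ = _ := by
        rw [tsum_mul_right, Real.norm_of_nonneg (Real.exp_pos _).le, mul_assoc]

theorem mellin_heatTrace (hlam : ∀ n, 0 < lam n) (hlim : Tendsto lam atTop atTop) {z : ℂ}
    (hz : 0 < z.re) (hsum : Summable fun n => ‖c n‖ / lam n ^ z.re) :
    mellin (heatTrace lam c) z = Gamma z * ∑' n, c n * (lam n : ℂ) ^ (-z) := by
  have hF : ∀ t ∈ Ioi (0 : ℝ),
      HasSum (fun n => c n * (Real.exp (-lam n * t) : ℂ)) (heatTrace lam c t) := fun t ht => by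
    simpa only [mul_comm (lam _) t, neg_mul] using hasSum_heatTrace hlim hsum ht
  rw [← (hasSum_mellin (fun n => Or.inr (hlam n)) hz hF hsum).tsum_eq, ← tsum_mul_left]
  exact tsum_congr fun n => by rw [cpow_neg, div_eq_mul_inv, mul_assoc]

end HeatTrace

noncomputable def heatRemainder (lam : ℕ → ℝ) (c : ℕ → ℂ) (p : ℕ) (b : ℕ → ℂ) (n : ℕ)
    (t : ℝ) : ℂ :=
  heatTrace lam c t - ∑ r ∈ Finset.range n, b r * (t : ℂ) ^ ((r : ℂ) - p)

noncomputable def zetaRegular (lam : ℕ → ℝ) (c : ℕ → ℂ) (p : ℕ) (b : ℕ → ℂ) (n : ℕ)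
    (z : ℂ) : ℂ :=
  (Gamma z)⁻¹ * (mellin ((Ioi 1).indicator (heatTrace lam c)) z
    + mellin ((Ioc 0 1).indicator (heatRemainder lam c p b n)) z)

noncomputable def zetaApprox (lam : ℕ → ℝ) (c : ℕ → ℂ) (p : ℕ) (b : ℕ → ℂ) (n : ℕ)
    (z : ℂ) : ℂ :=
  zetaRegular lam c p b n z + ∑ r ∈ Finset.range n, b r * invGammaDivSub ((p : ℂ) - r) z

noncomputable def expansionOrder (p : ℕ) (z : ℂ) : ℕ :=
  ⌊(p : ℝ) - z.re⌋₊ + 1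

theorem sub_expansionOrder_lt_re (p : ℕ) (z : ℂ) : (p : ℝ) - expansionOrder p z < z.re := by
  rw [expansionOrder, Nat.cast_add_one]
  linarith [Nat.lt_floor_add_one ((p : ℝ) - z.re)]

noncomputable def zetaCont (lam : ℕ → ℝ) (c : ℕ → ℂ) (p : ℕ) (b : ℕ → ℂ) (z : ℂ) : ℂ :=
  zetaApprox lam c p b (expansionOrder p z) z

section ZetaApprox

variable {lam : ℕ → ℝ} {c : ℕ → ℂ} {p : ℕ} {b : ℕ → ℂ} {σ : ℝ} {n : ℕ} {z : ℂ}

theorem continuousOn_heatRemainder (hlam : ∀ n, 0 < lam n) (hlim : Tendsto lam atTop atTop)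
    (hσ : Summable fun n => ‖c n‖ / lam n ^ σ) (n : ℕ) :
    ContinuousOn (heatRemainder lam c p b n) (Ioi 0) :=
  (continuousOn_heatTrace hlam hlim hσ).sub <| continuousOn_finsetSum _ fun _ _ =>
    continuousOn_const.mul fun _ ht =>
      (continuousAt_ofReal_cpow_const _ _ (Or.inr (ne_of_gt ht))).continuousWithinAt

theorem mellinConvergent_heatRemainder (hlam : ∀ n, 0 < lam n) (hlim : Tendsto lam atTop atTop)
    (hσ : Summable fun n => ‖c n‖ / lam n ^ σ)
    (hasy : HasAsympExp (fun t => (t : ℂ) ^ p * heatTrace lam c t) b)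
    (hz : (p : ℝ) - n < z.re) :
    MellinConvergent ((Ioc 0 1).indicator (heatRemainder lam c p b n)) z :=
  mellinConvergent_indicator_Ioc (continuousOn_heatRemainder hlam hlim hσ n)
    (hasy.isBigO_sub_sum_cpow n) hz

theorem differentiableAt_mellin_heatRemainder (hlam : ∀ n, 0 < lam n)
    (hlim : Tendsto lam atTop atTop) (hσ : Summable fun n => ‖c n‖ / lam n ^ σ)
    (hasy : HasAsympExp (fun t => (t : ℂ) ^ p * heatTrace lam c t) b)
    (hz : (p : ℝ) - n < z.re) :
    DifferentiableAt ℂ (mellin ((Ioc 0 1).indicator (heatRemainder lam c p b n))) z :=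
  differentiableAt_mellin_indicator_Ioc (continuousOn_heatRemainder hlam hlim hσ n)
    (hasy.isBigO_sub_sum_cpow n) hz

theorem mellin_heatRemainder_succ (hlam : ∀ n, 0 < lam n) (hlim : Tendsto lam atTop atTop)
    (hσ : Summable fun n => ‖c n‖ / lam n ^ σ)
    (hasy : HasAsympExp (fun t => (t : ℂ) ^ p * heatTrace lam c t) b)
    (hz : (p : ℝ) - n < z.re) :
    mellin ((Ioc 0 1).indicator (heatRemainder lam c p b n)) z
      = mellin ((Ioc 0 1).indicator (heatRemainder lam c p b (n + 1))) z
        + b n * (1 / (z + ((n : ℂ) - p))) := by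
  have hpow := hasMellin_cpow_Ioc ((n : ℂ) - p) (s := z)
    (by simp only [sub_re, natCast_re]; linarith)
  have hsum := hasMellin_add
    (mellinConvergent_heatRemainder hlam hlim hσ hasy (n := n + 1) (by push_cast; linarith))
    (hpow.1.const_smul (b n))
  rw [mellin_const_smul, hpow.2, smul_eq_mul] at hsum
  rw [← hsum.2]
  congr 1
  funext t
  by_cases ht : t ∈ Ioc 0 1
  · simp only [ht, indicator_of_mem, heatRemainder, Finset.sum_range_succ, smul_eq_mul]
    ring
  · simp [ht]

theorem mellin_heatTrace_eq_add (hlam : ∀ n, 0 < lam n) (hlim : Tendsto lam atTop atTop)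
    (hσ : Summable fun n => ‖c n‖ / lam n ^ σ)
    (hasy : HasAsympExp (fun t => (t : ℂ) ^ p * heatTrace lam c t) b) (hz : (p : ℝ) < z.re) :
    mellin (heatTrace lam c) z = mellin ((Ioi 1).indicator (heatTrace lam c)) z
      + mellin ((Ioc 0 1).indicator (heatRemainder lam c p b 0)) z := by
  obtain ⟨δ, hδ, hdecay⟩ := heatTrace_isBigO_exp_atTop hlam hlim hσ
  rw [← (hasMellin_add
    (mellinConvergent_indicator_Ioi_one (continuousOn_heatTrace hlam hlim hσ) hδ hdecay z)
    (mellinConvergent_heatRemainder hlam hlim hσ hasy (by simpa using hz))).2]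
  refine mellin_congr_Ioi (fun t (ht : 0 < t) => ?_) z
  by_cases h1 : 1 < t
  · simp [h1, not_le.mpr h1]
  · simp [h1, ht, not_lt.mp h1, heatRemainder]

theorem analyticAt_zetaRegular (hlam : ∀ n, 0 < lam n) (hlim : Tendsto lam atTop atTop)
    (hσ : Summable fun n => ‖c n‖ / lam n ^ σ)
    (hasy : HasAsympExp (fun t => (t : ℂ) ^ p * heatTrace lam c t) b)
    (hz : (p : ℝ) - n < z.re) : AnalyticAt ℂ (zetaRegular lam c p b n) z := by
  obtain ⟨δ, hδ, hdecay⟩ := heatTrace_isBigO_exp_atTop hlam hlim hσ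
  have htail := differentiable_mellin_indicator_Ioi_one (continuousOn_heatTrace hlam hlim hσ)
    hδ hdecay
  refine DifferentiableOn.analyticAt (s := {w | (p : ℝ) - n < w.re}) (fun w hw => ?_)
    ((isOpen_lt continuous_const continuous_re).mem_nhds hz)
  exact ((differentiable_one_div_Gamma w).mul ((htail w).add
    (differentiableAt_mellin_heatRemainder hlam hlim hσ hasy hw))).differentiableWithinAt

theorem zetaApprox_succ (hlam : ∀ n, 0 < lam n) (hlim : Tendsto lam atTop atTop)
    (hσ : Summable fun n => ‖c n‖ / lam n ^ σ)
    (hasy : HasAsympExp (fun t => (t : ℂ) ^ p * heatTrace lam c t) b)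
    (hz : (p : ℝ) - n < z.re) : zetaApprox lam c p b (n + 1) z = zetaApprox lam c p b n z := by
  have hne : z ≠ (p : ℂ) - n := by
    rintro rfl
    simp at hz
  rw [zetaApprox, zetaApprox, zetaRegular, zetaRegular,
    mellin_heatRemainder_succ hlam hlim hσ hasy hz,
    Finset.sum_range_succ, invGammaDivSub_of_ne hne]
  ring

theorem zetaApprox_eq_of_le (hlam : ∀ n, 0 < lam n) (hlim : Tendsto lam atTop atTop)
    (hσ : Summable fun n => ‖c n‖ / lam n ^ σ)
    (hasy : HasAsympExp (fun t => (t : ℂ) ^ p * heatTrace lam c t) b) {m : ℕ} (hmn : m ≤ n)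
    (hz : (p : ℝ) - m < z.re) : zetaApprox lam c p b n z = zetaApprox lam c p b m z := by
  induction n, hmn using Nat.le_induction with
  | base => rfl
  | succ n hmn ih =>
    have hmn' : (m : ℝ) ≤ n := by exact_mod_cast hmn
    rw [zetaApprox_succ hlam hlim hσ hasy (by linarith), ih]

theorem zetaApprox_zero_eq_tsum (hlam : ∀ n, 0 < lam n) (hlim : Tendsto lam atTop atTop)
    (hasy : HasAsympExp (fun t => (t : ℂ) ^ p * heatTrace lam c t) b) (hz : (p : ℝ) < z.re)
    (hsum : Summable fun n => ‖c n‖ / lam n ^ z.re) :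
    zetaApprox lam c p b 0 z = ∑' n, c n * (lam n : ℂ) ^ (-z) := by
  have hz₀ : 0 < z.re := lt_of_le_of_lt (Nat.cast_nonneg p) hz
  rw [zetaApprox, zetaRegular, Finset.sum_range_zero, add_zero,
    ← mellin_heatTrace_eq_add hlam hlim hsum hasy hz, mellin_heatTrace hlam hlim hz₀ hsum,
    inv_mul_cancel_left₀ (Gamma_ne_zero_of_re_pos hz₀)]

theorem analyticAt_zetaApprox (hlam : ∀ n, 0 < lam n) (hlim : Tendsto lam atTop atTop)
    (hσ : Summable fun n => ‖c n‖ / lam n ^ σ)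
    (hasy : HasAsympExp (fun t => (t : ℂ) ^ p * heatTrace lam c t) b)
    (hz : (p : ℝ) - n < z.re) (hpole : ∀ k : ℕ, 1 ≤ k → k ≤ p → z ≠ k) :
    AnalyticAt ℂ (zetaApprox lam c p b n) z :=
  (analyticAt_zetaRegular hlam hlim hσ hasy hz).add <| Finset.analyticAt_fun_sum _ fun r _ =>
    analyticAt_const.mul <| analyticAt_invGammaDivSub_natCast_sub p r fun hr =>
      hpole _ (by omega) (by omega)

theorem tendsto_sub_mul_zetaApprox (hlam : ∀ n, 0 < lam n) (hlim : Tendsto lam atTop atTop)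
    (hσ : Summable fun n => ‖c n‖ / lam n ^ σ)
    (hasy : HasAsympExp (fun t => (t : ℂ) ^ p * heatTrace lam c t) b) {k : ℕ}
    (hkp : k ≤ p) (hk : (p : ℝ) - n < (k : ℂ).re) :
    Tendsto (fun z => (z - k) * zetaApprox lam c p b n z) (𝓝[≠] (k : ℂ))
      (𝓝 (b (p - k) / Gamma k)) := by
  have hmem : p - k ∈ Finset.range n := by
    have : p < n + k := by
      rw [natCast_re] at hk
      exact_mod_cast (by linarith : (p : ℝ) < n + k)
    exact Finset.mem_range.mpr (by omega)
  set A := fun z => zetaRegular lam c p b n z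
    + ∑ r ∈ (Finset.range n).erase (p - k), b r * invGammaDivSub ((p : ℂ) - r) z
  have hA : AnalyticAt ℂ A k :=
    (analyticAt_zetaRegular hlam hlim hσ hasy hk).add <|
      Finset.analyticAt_fun_sum _ fun r hr => analyticAt_const.mul <|
        analyticAt_invGammaDivSub_natCast_sub p r fun _ hkr =>
          (Finset.mem_erase.mp hr).1 (by have := Nat.cast_injective hkr; omega)
  have hsplit : ∀ z, (z - k) * zetaApprox lam c p b n z
      = (z - k) * A z + b (p - k) * ((z - k) * invGammaDivSub k z) := fun z => by
    rw [zetaApprox, ← Finset.add_sum_erase _ _ hmem,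
      show (p : ℂ) - (p - k : ℕ) = k by push_cast [Nat.cast_sub hkp]; ring]
    ring
  have hregular : Tendsto (fun z => (z - k) * A z) (𝓝[≠] (k : ℂ)) (𝓝 0) := by
    have hcont : ContinuousAt (fun z => (z - k) * A z) (k : ℂ) :=
      (continuousAt_id.sub continuousAt_const).mul hA.continuousAt
    simpa using hcont.tendsto.mono_left nhdsWithin_le_nhds
  simp_rw [hsplit]
  simpa [div_eq_mul_inv] using hregular.add ((tendsto_sub_mul_invGammaDivSub k).const_mul _)

theorem zetaApprox_zero_of_lt (hn : p < n) : zetaApprox lam c p b n 0 = b p := by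
  rw [zetaApprox, zetaRegular, Gamma_zero, inv_zero, zero_mul, zero_add,
    Finset.sum_eq_single_of_mem p (Finset.mem_range.mpr hn)]
  · rw [sub_self, invGammaDivSub_zero_zero, mul_one]
  · intro r _ hr
    rw [invGammaDivSub_zero_of_ne (sub_ne_zero.mpr (by exact_mod_cast hr.symm)), mul_zero]

theorem zetaCont_eq_zetaApprox (hlam : ∀ n, 0 < lam n) (hlim : Tendsto lam atTop atTop)
    (hσ : Summable fun n => ‖c n‖ / lam n ^ σ)
    (hasy : HasAsympExp (fun t => (t : ℂ) ^ p * heatTrace lam c t) b)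
    (hz : (p : ℝ) - n < z.re) : zetaCont lam c p b z = zetaApprox lam c p b n z := by
  rcases le_total n (expansionOrder p z) with h | h
  · exact zetaApprox_eq_of_le hlam hlim hσ hasy h hz
  · exact (zetaApprox_eq_of_le hlam hlim hσ hasy h (sub_expansionOrder_lt_re p z)).symm

theorem zetaCont_eventuallyEq (hlam : ∀ n, 0 < lam n) (hlim : Tendsto lam atTop atTop)
    (hσ : Summable fun n => ‖c n‖ / lam n ^ σ)
    (hasy : HasAsympExp (fun t => (t : ℂ) ^ p * heatTrace lam c t) b)
    (hz : (p : ℝ) - n < z.re) : zetaCont lam c p b =ᶠ[𝓝 z] zetaApprox lam c p b n := by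
  filter_upwards [(isOpen_lt continuous_const continuous_re).mem_nhds hz] with w hw
  exact zetaCont_eq_zetaApprox hlam hlim hσ hasy hw

theorem zetaCont_eq_tsum (hlam : ∀ n, 0 < lam n) (hlim : Tendsto lam atTop atTop)
    (hasy : HasAsympExp (fun t => (t : ℂ) ^ p * heatTrace lam c t) b) (hz : (p : ℝ) < z.re)
    (hsum : Summable fun n => ‖c n‖ / lam n ^ z.re) :
    zetaCont lam c p b z = ∑' n, c n * (lam n : ℂ) ^ (-z) := by
  rw [zetaCont_eq_zetaApprox hlam hlim hsum hasy (n := 0) (by simpa using hz),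
    zetaApprox_zero_eq_tsum hlam hlim hasy hz hsum]

theorem analyticAt_zetaCont (hlam : ∀ n, 0 < lam n) (hlim : Tendsto lam atTop atTop)
    (hσ : Summable fun n => ‖c n‖ / lam n ^ σ)
    (hasy : HasAsympExp (fun t => (t : ℂ) ^ p * heatTrace lam c t) b)
    (hpole : ∀ k : ℕ, 1 ≤ k → k ≤ p → z ≠ k) : AnalyticAt ℂ (zetaCont lam c p b) z :=
  (analyticAt_zetaApprox hlam hlim hσ hasy (sub_expansionOrder_lt_re p z) hpole).congr
    (zetaCont_eventuallyEq hlam hlim hσ hasy (sub_expansionOrder_lt_re p z)).symm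

theorem tendsto_sub_mul_zetaCont (hlam : ∀ n, 0 < lam n) (hlim : Tendsto lam atTop atTop)
    (hσ : Summable fun n => ‖c n‖ / lam n ^ σ)
    (hasy : HasAsympExp (fun t => (t : ℂ) ^ p * heatTrace lam c t) b) {k : ℕ} (hkp : k ≤ p) :
    Tendsto (fun z => (z - k) * zetaCont lam c p b z) (𝓝[≠] (k : ℂ))
      (𝓝 (b (p - k) / Gamma k)) := by
  have hk := sub_expansionOrder_lt_re p k
  refine (tendsto_sub_mul_zetaApprox hlam hlim hσ hasy hkp hk).congr' ?_
  filter_upwards [(zetaCont_eventuallyEq hlam hlim hσ hasy hk).filter_mono nhdsWithin_le_nhds]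
    with z hz
  rw [hz]

theorem zetaCont_zero : zetaCont lam c p b 0 = b p :=
  zetaApprox_zero_of_lt (by simp [expansionOrder])

end ZetaApprox

theorem zeta_from_heat_kernel_general
    (p : ℕ) (lam : ℕ → ℝ) (c : ℕ → ℂ)
    (hlam : ∀ n, 0 < lam n)
    (hlim : Filter.Tendsto lam Filter.atTop Filter.atTop)
    (hconv : ∀ z : ℂ, (p : ℝ) < z.re → Summable (fun n => c n * (lam n : ℂ) ^ (-z)))
    (b : ℕ → ℂ)
    (hasy : HasAsympExp
      (fun t : ℝ => (t : ℂ) ^ p * ∑' n : ℕ, c n * (Real.exp (-t * lam n) : ℂ)) b) :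
    ∃ Z : ℂ → ℂ,
      (∀ z : ℂ, (p : ℝ) < z.re → Z z = ∑' n : ℕ, c n * (lam n : ℂ) ^ (-z)) ∧
      (∀ z : ℂ, (¬ ∃ k : ℕ, 1 ≤ k ∧ k ≤ p ∧ z = (k : ℂ)) → AnalyticAt ℂ Z z) ∧
      (∀ k : ℕ, 1 ≤ k → k ≤ p →
        Filter.Tendsto (fun z : ℂ => (z - (k : ℂ)) * Z z)
          (nhdsWithin (k : ℂ) {(k : ℂ)}ᶜ)
          (nhds (b (p - k) / Complex.Gamma (k : ℂ)))) ∧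
      Z 0 = b p := by
  have hsum : ∀ z : ℂ, (p : ℝ) < z.re → Summable fun n => ‖c n‖ / lam n ^ z.re :=
    fun z hz => summable_norm_div_rpow_re hlam (hconv z hz)
  have hσ := hsum (p + 1) (by simp)
  exact ⟨zetaCont lam c p b, fun z hz => zetaCont_eq_tsum hlam hlim hasy hz (hsum z hz),
    fun z hz => analyticAt_zetaCont hlam hlim hσ hasy fun k hk1 hkp hzk => hz ⟨k, hk1, hkp, hzk⟩,
    fun k _ hkp => tendsto_sub_mul_zetaCont hlam hlim hσ hasy hkp, zetaCont_zero⟩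

/-- Heat-kernel-to-zeta correspondence: if `t^p ∑ₙ cₙ e^{-tλₙ} ∼ ∑ᵣ bᵣ tʳ`, then
`ζ(z) = ∑ₙ cₙ λₙ^{-z}` extends meromorphically to `ℂ` with at most simple poles
at `z = 1,…,p`, `Res_{z=k} ζ = b_{p−k}/Γ(k)`, and `ζ(0) = b_p`. -/
theorem zeta_from_heat_kernel
    (p : ℕ) (hp : 1 ≤ p) (lam : ℕ → ℝ) (c : ℕ → ℂ)
    (hlam : ∀ n, 0 < lam n)
    (hlim : Filter.Tendsto lam Filter.atTop Filter.atTop)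
    (hconv : ∀ z : ℂ, (p : ℝ) < z.re → Summable (fun n => c n * (lam n : ℂ) ^ (-z)))
    (b : ℕ → ℂ)
    (hasy : HasAsympExp
      (fun t : ℝ => (t : ℂ) ^ p * ∑' n : ℕ, c n * (Real.exp (-t * lam n) : ℂ)) b) :
    ∃ Z : ℂ → ℂ,
      (∀ z : ℂ, (p : ℝ) < z.re → Z z = ∑' n : ℕ, c n * (lam n : ℂ) ^ (-z)) ∧
      (∀ z : ℂ, (¬ ∃ k : ℕ, 1 ≤ k ∧ k ≤ p ∧ z = (k : ℂ)) → AnalyticAt ℂ Z z) ∧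
      (∀ k : ℕ, 1 ≤ k → k ≤ p →
        Filter.Tendsto (fun z : ℂ => (z - (k : ℂ)) * Z z)
          (nhdsWithin (k : ℂ) {(k : ℂ)}ᶜ)
          (nhds (b (p - k) / Complex.Gamma (k : ℂ)))) ∧
      Z 0 = b p :=
  zeta_from_heat_kernel_general p lam c hlam hlim hconv b hasy
end
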